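/- If L₁ and L₂ are regular languages over a finite alphabet Σ, then their shuffle L₁ ‖ L₂ is a regular language. -/

import Mathlib

variable {α : Type*}

/-- The shuffle of two words: `ε ‖ v = {v}`, `u ‖ ε = {u}`,
`(a·u) ‖ (b·v) = {a}·(u ‖ (b·v)) ∪ {b}·((a·u) ‖ v)`. -/
def wordShuffle : List α → List α → Set (List α)
  | [], v => {v}
  | a :: u, [] => {a :: u}
  | a :: u, b :: v =>
      (fun w => a :: w) '' wordShuffle u (b :: v) ∪ (fun w => b :: w) '' wordShuffle (a :: u) v
  termination_by u v => u.length + v.length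

/-- The shuffle of two languages: `L₁ ‖ L₂ = ⋃ { u ‖ v | u ∈ L₁, v ∈ L₂ }`. -/
def langShuffle (L₁ L₂ : Language α) : Language α :=
  ⋃ u ∈ L₁, ⋃ v ∈ L₂, wordShuffle u v

/-- The left quotient of a language by a symbol: `a\L = { w | a·w ∈ L }`. -/
def leftQuot (a : α) (L : Language α) : Language α :=
  { w | a :: w ∈ L }

/-! Run DFAs for `L₁` and `L₂` side by side and let each letter advance one of the two,
chosen nondeterministically. The resulting NFA on the product of the state spaces accepts
`L₁ ‖ L₂`, because `a :: w ∈ L₁ ‖ L₂` exactly when `w ∈ (a\L₁) ‖ L₂` or `w ∈ L₁ ‖ (a\L₂)`, and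
the left quotients of a DFA's languages are those of its successor states. -/

lemma wordShuffle_nil_left (v : List α) : wordShuffle [] v = {v} := by
  rw [wordShuffle]

lemma wordShuffle_nil_right (u : List α) : wordShuffle u [] = {u} := by
  cases u <;> rw [wordShuffle]

lemma nil_mem_wordShuffle_iff {u v : List α} :
    [] ∈ wordShuffle u v ↔ u = [] ∧ v = [] := by
  match u, v with
  | [], v => simp [wordShuffle_nil_left, eq_comm]
  | _ :: _, [] => simp [wordShuffle_nil_right]
  | _ :: _, _ :: _ => simp [wordShuffle]

lemma cons_mem_wordShuffle_iff {a : α} {w u v : List α} :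
    a :: w ∈ wordShuffle u v ↔
      (∃ u', u = a :: u' ∧ w ∈ wordShuffle u' v) ∨ (∃ v', v = a :: v' ∧ w ∈ wordShuffle u v') := by
  match u, v with
  | [], v => simp [wordShuffle_nil_left, eq_comm]
  | _ :: _, [] => simp [wordShuffle_nil_right, eq_comm]
  | _ :: _, _ :: _ => simp [wordShuffle, eq_comm, and_comm]

lemma mem_langShuffle {w : List α} {L₁ L₂ : Language α} :
    w ∈ langShuffle L₁ L₂ ↔ ∃ u ∈ L₁, ∃ v ∈ L₂, w ∈ wordShuffle u v := by
  change w ∈ (⋃ u ∈ L₁, ⋃ v ∈ L₂, wordShuffle u v : Set (List α)) ↔ _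
  simp only [Set.mem_iUnion, exists_prop]

lemma nil_mem_langShuffle_iff {L₁ L₂ : Language α} :
    [] ∈ langShuffle L₁ L₂ ↔ [] ∈ L₁ ∧ [] ∈ L₂ := by
  simp [mem_langShuffle, nil_mem_wordShuffle_iff]

lemma cons_mem_langShuffle_iff {a : α} {w : List α} {L₁ L₂ : Language α} :
    a :: w ∈ langShuffle L₁ L₂ ↔
      w ∈ langShuffle (leftQuot a L₁) L₂ ∨ w ∈ langShuffle L₁ (leftQuot a L₂) := by
  simp only [mem_langShuffle, cons_mem_wordShuffle_iff]
  constructor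
  · rintro ⟨u, hu, v, hv, ⟨u', rfl, hw⟩ | ⟨v', rfl, hw⟩⟩
    · exact .inl ⟨u', hu, v, hv, hw⟩
    · exact .inr ⟨u, hu, v', hv, hw⟩
  · rintro (⟨u, hu, v, hv, hw⟩ | ⟨u, hu, v, hv, hw⟩)
    · exact ⟨a :: u, hu, v, hv, .inl ⟨u, rfl, hw⟩⟩
    · exact ⟨u, hu, a :: v, hv, .inr ⟨v, rfl, hw⟩⟩

namespace DFA

variable {σ₁ σ₂ : Type*}

lemma leftQuot_acceptsFrom {σ : Type*} (M : DFA α σ) (s : σ) (a : α) :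
    leftQuot a (M.acceptsFrom s) = M.acceptsFrom (M.step s a) :=
  rfl

def shuffle (M₁ : DFA α σ₁) (M₂ : DFA α σ₂) : NFA α (σ₁ × σ₂) where
  step s a := {(M₁.step s.1 a, s.2), (s.1, M₂.step s.2 a)}
  start := {(M₁.start, M₂.start)}
  accept := M₁.accept ×ˢ M₂.accept

theorem acceptsFrom_shuffle (M₁ : DFA α σ₁) (M₂ : DFA α σ₂) (s₁ : σ₁) (s₂ : σ₂) :
    (M₁.shuffle M₂).acceptsFrom {(s₁, s₂)} =
      langShuffle (M₁.acceptsFrom s₁) (M₂.acceptsFrom s₂) := by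
  ext w
  induction w generalizing s₁ s₂ with
  | nil => simp [nil_mem_langShuffle_iff, shuffle, mem_acceptsFrom]
  | cons a w ih =>
    rw [NFA.cons_mem_acceptsFrom, NFA.stepSet_singleton, cons_mem_langShuffle_iff,
      leftQuot_acceptsFrom, leftQuot_acceptsFrom, ← ih, ← ih]
    simp only [shuffle, Set.insert_eq, NFA.acceptsFrom_union, Language.mem_add]

theorem accepts_shuffle (M₁ : DFA α σ₁) (M₂ : DFA α σ₂) :
    (M₁.shuffle M₂).accepts = langShuffle M₁.accepts M₂.accepts :=
  acceptsFrom_shuffle M₁ M₂ M₁.start M₂.start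

end DFA

theorem isRegular_langShuffle_general {L₁ L₂ : Language α}
    (h₁ : L₁.IsRegular) (h₂ : L₂.IsRegular) : (langShuffle L₁ L₂).IsRegular := by
  obtain ⟨σ₁, _, M₁, rfl⟩ := h₁
  obtain ⟨σ₂, _, M₂, rfl⟩ := h₂
  exact ⟨_, Fintype.ofFinite _, (M₁.shuffle M₂).toDFA,
    by rw [NFA.toDFA_correct, DFA.accepts_shuffle]⟩

theorem isRegular_langShuffle [Fintype α] {L₁ L₂ : Language α}
    (h₁ : L₁.IsRegular) (h₂ : L₂.IsRegular) : (langShuffle L₁ L₂).IsRegular :=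
  isRegular_langShuffle_general h₁ h₂
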